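/- arXiv:1807.09845 — 3 statements merged into one kernel-verified Lean document; each statement's English description precedes it below -/
import Mathlib

section
/- Let μ be a probability measure on ℝⁿ satisfying a Poincaré inequality with constant C_P ≤ 1, and let u satisfy ∫u dμ = 0, ∫u² dμ = 1, and ∫|∇u|² dμ ≤ 1 + ε for some ε ≥ 0. Then for any h ∈ H¹(μ), ∫ u h dμ − ∫ ∇u·∇h dμ ≤ √ε (∫|∇h|² dμ)^{1/2}. -/
open MeasureTheory Real

section Aux

variable {E : Type*} [NormedAddCommGroup E] [InnerProductSpace ℝ E] [CompleteSpace E]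

lemma hasGradientAt_combo {u h : E → ℝ} {t : ℝ} {x : E}
    (hu : DifferentiableAt ℝ u x) (hh : DifferentiableAt ℝ h x) :
    HasGradientAt (fun y => u y + t * h y) (gradient u x + t • gradient h x) x := by
  have h1 := hu.hasGradientAt
  have h2 := hh.hasGradientAt
  rw [hasGradientAt_iff_hasFDerivAt] at h1 h2 ⊢
  have h3 := h1.add (h2.const_mul t)
  rw [map_add, _root_.map_smul]
  exact h3

omit [CompleteSpace E] in
lemma expand_norm_combo (a b : E) (t : ℝ) :
    ‖a + t • b‖ ^ 2 = ‖a‖ ^ 2 + 2 * t * (inner ℝ a b : ℝ) + t ^ 2 * ‖b‖ ^ 2 := by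
  rw [norm_add_sq_real, real_inner_smul_right, norm_smul, mul_pow, Real.norm_eq_abs, sq_abs]
  ring

lemma grad_sq_bound {u h : E → ℝ} {t : ℝ} (ht : t ≠ 0) {x : E}
    (hx : ¬(¬DifferentiableAt ℝ u x ∧ ¬DifferentiableAt ℝ h x ∧
      DifferentiableAt ℝ (fun y => u y + t * h y) x)) :
    ‖gradient (fun y => u y + t * h y) x‖ ^ 2 ≤ ‖gradient u x + t • gradient h x‖ ^ 2 := by
  by_cases hu : DifferentiableAt ℝ u x
  · by_cases hh : DifferentiableAt ℝ h x
    · rw [(hasGradientAt_combo hu hh).gradient]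
    · have hf : ¬ DifferentiableAt ℝ (fun y => u y + t * h y) x := by
        intro hf
        apply hh
        have hd : DifferentiableAt ℝ (fun y => (u y + t * h y) - u y) x := hf.sub hu
        have h2 : DifferentiableAt ℝ (fun y => t * h y) x := by
          simpa [add_sub_cancel_left] using hd
        have h3 := h2.const_mul t⁻¹
        simpa [← mul_assoc, inv_mul_cancel₀ ht] using h3
      rw [gradient_eq_zero_of_not_differentiableAt hf]
      simpa using sq_nonneg ‖gradient u x + t • gradient h x‖
  · by_cases hh : DifferentiableAt ℝ h x
    · have hf : ¬ DifferentiableAt ℝ (fun y => u y + t * h y) x := by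
        intro hf
        apply hu
        have hd : DifferentiableAt ℝ (fun y => (u y + t * h y) - t * h y) x :=
          hf.sub (hh.const_mul t)
        simpa [add_sub_cancel_right] using hd
      rw [gradient_eq_zero_of_not_differentiableAt hf]
      simpa using sq_nonneg ‖gradient u x + t • gradient h x‖
    · have hf : ¬ DifferentiableAt ℝ (fun y => u y + t * h y) x :=
        fun hf => hx ⟨hu, hh, hf⟩
      rw [gradient_eq_zero_of_not_differentiableAt hf]
      simpa using sq_nonneg ‖gradient u x + t • gradient h x‖

lemma measurable_gradient (f : E → ℝ) [MeasurableSpace E] [BorelSpace E] :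
    Measurable (gradient f) := by
  have : gradient f = fun x => (InnerProductSpace.toDual ℝ E).symm (fderiv ℝ f x) := rfl
  rw [this]
  exact (InnerProductSpace.toDual ℝ E).symm.continuous.measurable.comp (measurable_fderiv ℝ f)

end Aux

/-- Approximate integration by parts (Lemma 2.3 of the paper):
if `μ` satisfies a Poincaré inequality with constant `CP ≤ 1` and `u` is a normalized
approximate optimizer, then for every `h ∈ H¹(μ)` (here: `u`, `h` and the test functions of the
Poincaré inequality are everywhere differentiable, with the function, its square and `|∇·|²`
`μ`-integrable),
`∫ u h dμ - ∫ ∇u·∇h dμ ≤ √ε (∫ |∇h|² dμ)^{1/2}`. -/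
theorem approx_integration_by_parts {n : ℕ}
    (μ : Measure (EuclideanSpace ℝ (Fin n))) [IsProbabilityMeasure μ]
    (CP ε : ℝ) (hCP : CP ≤ 1) (hε : 0 ≤ ε)
    (hPoincare : ∀ f : EuclideanSpace ℝ (Fin n) → ℝ, Differentiable ℝ f →
      Integrable f μ → Integrable (fun x => (f x) ^ 2) μ →
      Integrable (fun x => ‖gradient f x‖ ^ 2) μ →
      ∫ x, (f x) ^ 2 ∂μ - (∫ x, f x ∂μ) ^ 2 ≤ CP * ∫ x, ‖gradient f x‖ ^ 2 ∂μ)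
    (u : EuclideanSpace ℝ (Fin n) → ℝ) (hu_diff : Differentiable ℝ u)
    (hu_int : Integrable u μ) (hu_sq : Integrable (fun x => (u x) ^ 2) μ)
    (hu_grad : Integrable (fun x => ‖gradient u x‖ ^ 2) μ)
    (hmean : ∫ x, u x ∂μ = 0) (hvar : ∫ x, (u x) ^ 2 ∂μ = 1)
    (hdir : ∫ x, ‖gradient u x‖ ^ 2 ∂μ ≤ 1 + ε)
    (h : EuclideanSpace ℝ (Fin n) → ℝ) (hh_diff : Differentiable ℝ h)
    (hh_int : Integrable h μ) (hh_sq : Integrable (fun x => (h x) ^ 2) μ)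
    (hh_grad : Integrable (fun x => ‖gradient h x‖ ^ 2) μ)
    (huh : Integrable (fun x => u x * h x) μ)
    (hgradprod : Integrable (fun x => (inner ℝ (gradient u x) (gradient h x) : ℝ)) μ) :
    ∫ x, u x * h x ∂μ - ∫ x, (inner ℝ (gradient u x) (gradient h x) : ℝ) ∂μ ≤
      Real.sqrt ε * (∫ x, ‖gradient h x‖ ^ 2 ∂μ) ^ (1/2 : ℝ) := by
  classical
  set A := ∫ x, u x * h x ∂μ with hA
  set Bv := ∫ x, (inner ℝ (gradient u x) (gradient h x) : ℝ) ∂μ with hB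
  set G := ∫ x, ‖gradient h x‖ ^ 2 ∂μ with hG
  have hG0 : 0 ≤ G := integral_nonneg fun x => by positivity
  -- (∫ h)² ≤ ∫ h²
  have hmean2 : (∫ x, h x ∂μ) ^ 2 ≤ ∫ x, (h x) ^ 2 ∂μ := by
    set m := ∫ x, h x ∂μ with hm
    have h1 : 0 ≤ ∫ x, (h x - m) ^ 2 ∂μ := integral_nonneg fun x => sq_nonneg _
    have i1 : Integrable (fun x => (h x) ^ 2 - (2 * m) * h x) μ := by
      exact hh_sq.sub (hh_int.const_mul (2 * m))
    have i2 : Integrable (fun x => (2 * m) * h x) μ := hh_int.const_mul (2 * m)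
    have h2 : ∫ x, (h x - m) ^ 2 ∂μ = (∫ x, (h x) ^ 2 ∂μ) - m ^ 2 := by
      have he : (fun x => (h x - m) ^ 2) =
          fun x => ((h x) ^ 2 - (2 * m) * h x) + m ^ 2 := by
        funext x; ring
      rw [he, integral_add i1 (integrable_const _), integral_sub hh_sq i2,
        integral_const_mul, integral_const]
      simp only [measure_univ, probReal_univ, ENNReal.toReal_one, smul_eq_mul, one_mul]
      rw [← hm]; ring
    linarith
  -- bad sets
  set Bad : ℝ → Set (EuclideanSpace ℝ (Fin n)) := fun t =>
    {x | ¬DifferentiableAt ℝ u x ∧ ¬DifferentiableAt ℝ h x ∧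
      DifferentiableAt ℝ (fun y => u y + t * h y) x} with hBadDef
  have hBadMeas : ∀ t, MeasurableSet (Bad t) := by
    intro t
    have : Bad t = {x | DifferentiableAt ℝ u x}ᶜ ∩
        ({x | DifferentiableAt ℝ h x}ᶜ ∩
          {x | DifferentiableAt ℝ (fun y => u y + t * h y) x}) := by
      ext x
      simp [hBadDef, Set.mem_setOf_eq]
    rw [this]
    exact (measurableSet_of_differentiableAt ℝ u).compl.inter
      ((measurableSet_of_differentiableAt ℝ h).compl.inter
        (measurableSet_of_differentiableAt ℝ _))
  have hdisj : Pairwise (Function.onFun Disjoint Bad) := by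
    intro s t hst
    rw [Function.onFun, Set.disjoint_left]
    intro x hxs hxt
    simp only [hBadDef, Set.mem_setOf_eq] at hxs hxt
    obtain ⟨hu1, hh1, hf1⟩ := hxs
    obtain ⟨-, -, hf2⟩ := hxt
    apply hh1
    have hd : DifferentiableAt ℝ (fun y => (u y + s * h y) - (u y + t * h y)) x := hf1.sub hf2
    have hd2 : DifferentiableAt ℝ (fun y => (s - t) * h y) x := by
      have he : (fun y => (s - t) * h y) = fun y => (u y + s * h y) - (u y + t * h y) := by
        funext y; ring
      rw [he]; exact hd
    have hst' : s - t ≠ 0 := sub_ne_zero.mpr hst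
    have h3 := hd2.const_mul (s - t)⁻¹
    simpa [← mul_assoc, inv_mul_cancel₀ hst'] using h3
  have hcount : Set.Countable {t : ℝ | 0 < μ (Bad t)} :=
    MeasureTheory.Measure.countable_meas_pos_of_disjoint_iUnion hBadMeas hdisj
  -- the key inequality for good nonzero t
  have key : ∀ t : ℝ, t ≠ 0 → μ (Bad t) = 0 → 2 * t * (A - Bv) ≤ ε + t ^ 2 * G := by
    intro t ht hμt
    set f : EuclideanSpace ℝ (Fin n) → ℝ := fun y => u y + t * h y with hfdef
    have hae : ∀ᵐ x ∂μ, x ∉ Bad t := by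
      rw [ae_iff]
      simpa [not_not] using hμt
    have hptw : ∀ᵐ x ∂μ, ‖gradient f x‖ ^ 2 ≤ ‖gradient u x + t • gradient h x‖ ^ 2 := by
      filter_upwards [hae] with x hx
      refine grad_sq_bound ht (fun hc => hx ?_)
      simp only [hBadDef, Set.mem_setOf_eq]
      exact hc
    have hmeasf : AEStronglyMeasurable (fun x => ‖gradient f x‖ ^ 2) μ :=
      (((measurable_gradient f).norm).pow_const 2).aestronglyMeasurable
    have hRexp : (fun x : EuclideanSpace ℝ (Fin n) =>
        ‖gradient u x + t • gradient h x‖ ^ 2) =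
        fun x => ‖gradient u x‖ ^ 2 + 2 * t * (inner ℝ (gradient u x) (gradient h x) : ℝ)
          + t ^ 2 * ‖gradient h x‖ ^ 2 := by
      funext x; exact expand_norm_combo _ _ t
    have i3 : Integrable (fun x => ‖gradient u x‖ ^ 2
        + 2 * t * (inner ℝ (gradient u x) (gradient h x) : ℝ)) μ := by
      exact hu_grad.add (hgradprod.const_mul (2 * t))
    have i4 : Integrable (fun x => t ^ 2 * ‖gradient h x‖ ^ 2) μ := hh_grad.const_mul (t ^ 2)
    have i5 : Integrable (fun x => 2 * t * (inner ℝ (gradient u x) (gradient h x) : ℝ)) μ :=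
      hgradprod.const_mul (2 * t)
    have hRint : Integrable (fun x : EuclideanSpace ℝ (Fin n) =>
        ‖gradient u x + t • gradient h x‖ ^ 2) μ := by
      rw [hRexp]
      exact i3.add i4
    have hfgrad_int : Integrable (fun x => ‖gradient f x‖ ^ 2) μ := by
      apply Integrable.mono' hRint hmeasf
      filter_upwards [hptw] with x hx
      rw [Real.norm_eq_abs, abs_of_nonneg (by positivity)]
      exact hx
    have hf_int : Integrable f μ := by
      exact hu_int.add (hh_int.const_mul t)
    have hf_sq_eq : (fun x => (f x) ^ 2) =
        fun x => ((u x) ^ 2 + (2 * t) * (u x * h x)) + t ^ 2 * (h x) ^ 2 := by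
      funext x; simp only [hfdef]; ring
    have i6 : Integrable (fun x => (u x) ^ 2 + (2 * t) * (u x * h x)) μ := by
      exact hu_sq.add (huh.const_mul (2 * t))
    have i7 : Integrable (fun x => t ^ 2 * (h x) ^ 2) μ := hh_sq.const_mul (t ^ 2)
    have i8 : Integrable (fun x => (2 * t) * (u x * h x)) μ := huh.const_mul (2 * t)
    have i9 : Integrable (fun x => t * h x) μ := hh_int.const_mul t
    have hf_sq : Integrable (fun x => (f x) ^ 2) μ := by
      rw [hf_sq_eq]
      exact i6.add i7
    have hpoin := hPoincare f (hu_diff.add (hh_diff.const_mul t)) hf_int hf_sq hfgrad_int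
    have hIf : ∫ x, f x ∂μ = t * ∫ x, h x ∂μ := by
      simp only [hfdef]
      rw [integral_add hu_int i9, hmean, integral_const_mul, zero_add]
    have hIf2 : ∫ x, (f x) ^ 2 ∂μ = 1 + 2 * t * A + t ^ 2 * ∫ x, (h x) ^ 2 ∂μ := by
      rw [hf_sq_eq, integral_add i6 i7, integral_add hu_sq i8, integral_const_mul,
        integral_const_mul, hvar, ← hA]
    have hIgrad : ∫ x, ‖gradient f x‖ ^ 2 ∂μ ≤
        (∫ x, ‖gradient u x‖ ^ 2 ∂μ) + 2 * t * Bv + t ^ 2 * G := by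
      have h1 : ∫ x, ‖gradient f x‖ ^ 2 ∂μ ≤
          ∫ x, ‖gradient u x + t • gradient h x‖ ^ 2 ∂μ :=
        integral_mono_ae hfgrad_int hRint hptw
      have h2 : ∫ x, ‖gradient u x + t • gradient h x‖ ^ 2 ∂μ =
          (∫ x, ‖gradient u x‖ ^ 2 ∂μ) + 2 * t * Bv + t ^ 2 * G := by
        rw [hRexp, integral_add i3 i4, integral_add hu_grad i5,
          integral_const_mul, integral_const_mul, ← hB, ← hG]
      linarith
    have hnn : 0 ≤ ∫ x, ‖gradient f x‖ ^ 2 ∂μ := integral_nonneg fun x => by positivity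
    have hCPstep : CP * ∫ x, ‖gradient f x‖ ^ 2 ∂μ ≤ ∫ x, ‖gradient f x‖ ^ 2 ∂μ :=
      mul_le_of_le_one_left hnn hCP
    rw [hIf, hIf2] at hpoin
    have hq : 0 ≤ t ^ 2 * ((∫ x, (h x) ^ 2 ∂μ) - (∫ x, h x ∂μ) ^ 2) :=
      mul_nonneg (sq_nonneg t) (by linarith)
    nlinarith [hpoin, hCPstep, hIgrad, hdir, hq]
  -- inequality holds for all t by density
  have allT : ∀ t : ℝ, 2 * t * (A - Bv) ≤ ε + t ^ 2 * G := by
    have hsub : {t : ℝ | ¬ (2 * t * (A - Bv) ≤ ε + t ^ 2 * G)} ⊆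
        {t : ℝ | 0 < μ (Bad t)} ∪ {0} := by
      intro t ht
      by_contra hmem
      simp only [Set.mem_union, Set.mem_setOf_eq, Set.mem_singleton_iff, not_or] at hmem
      obtain ⟨h1, h2⟩ := hmem
      exact ht (key t h2 (by simpa [pos_iff_ne_zero, not_not] using h1))
    have hc : Set.Countable {t : ℝ | ¬ (2 * t * (A - Bv) ≤ ε + t ^ 2 * G)} :=
      (hcount.union (Set.countable_singleton 0)).mono hsub
    have hd : Dense {t : ℝ | 2 * t * (A - Bv) ≤ ε + t ^ 2 * G} := by
      have hdc := hc.dense_compl ℝ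
      have hcc : {t : ℝ | ¬ (2 * t * (A - Bv) ≤ ε + t ^ 2 * G)}ᶜ =
          {t : ℝ | 2 * t * (A - Bv) ≤ ε + t ^ 2 * G} := by
        ext t; simp [not_not]
      rwa [hcc] at hdc
    have hclosed : IsClosed {t : ℝ | 2 * t * (A - Bv) ≤ ε + t ^ 2 * G} := by
      apply isClosed_le <;> fun_prop
    intro t
    have huniv : {t : ℝ | 2 * t * (A - Bv) ≤ ε + t ^ 2 * G} = Set.univ := by
      rw [← hclosed.closure_eq, hd.closure_eq]
    have hmem : t ∈ {t : ℝ | 2 * t * (A - Bv) ≤ ε + t ^ 2 * G} := by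
      rw [huniv]; trivial
    exact hmem
  -- final arithmetic
  rw [← Real.sqrt_eq_rpow, ← Real.sqrt_mul hε]
  set D := A - Bv with hD
  by_cases hDpos : D ≤ 0
  · exact hDpos.trans (Real.sqrt_nonneg _)
  push_neg at hDpos
  have hDG : D ^ 2 ≤ ε * G := by
    rcases eq_or_lt_of_le hG0 with hGz | hGpos
    · exfalso
      have h1 := allT ((ε + 1) / (2 * D))
      rw [← hGz, mul_zero] at h1
      have h2 : 2 * ((ε + 1) / (2 * D)) * D = ε + 1 := by
        field_simp
      rw [h2] at h1
      linarith
    · have hG' : G ≠ 0 := ne_of_gt hGpos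
      have h1 := allT (D / G)
      have h3 : 2 * (D / G) * D = 2 * (D ^ 2 / G) := by ring
      have h4 : (D / G) ^ 2 * G = D ^ 2 / G := by
        field_simp
      rw [h3, h4] at h1
      have h5 : D ^ 2 / G ≤ ε := by linarith
      calc D ^ 2 = (D ^ 2 / G) * G := by field_simp
      _ ≤ ε * G := mul_le_mul_of_nonneg_right h5 hG0
  have h6 := Real.sqrt_le_sqrt hDG
  rwa [Real.sqrt_sq hDpos.le] at h6
end

section
/- Let μ satisfy the LSI with constant 1, let u > 0 with ∫u² dμ = 1 and log u being λ-Lipschitz. Then −∫ log u dμ ≤ λ² and for any t > 0, ∫ u^{−t} dμ ≤ exp(tλ²(1 + t/2)). -/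
open MeasureTheory Real Filter

/-- The entropy functional `Ent_μ(g) = ∫ g log g dμ - (∫ g dμ) log ∫ g dμ`. -/
noncomputable def entFn {E : Type*} [MeasurableSpace E] (μ : Measure E) (g : E → ℝ) : ℝ :=
  (∫ x, g x * Real.log (g x) ∂μ) - (∫ x, g x ∂μ) * Real.log (∫ x, g x ∂μ)



lemma grad_exp_bound {n : ℕ} {G : EuclideanSpace ℝ (Fin n) → ℝ} {C : NNReal}
    (hG : LipschitzWith C G) (x : EuclideanSpace ℝ (Fin n)) :
    ‖gradient (fun y => Real.exp (G y)) x‖ ≤ C * Real.exp (G x) := by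
  set f : EuclideanSpace ℝ (Fin n) → ℝ := fun y => Real.exp (G y) with hf
  have hnorm : ‖gradient f x‖ = ‖fderiv ℝ f x‖ := by
    simp [gradient]
  rw [hnorm]
  by_cases hd : DifferentiableAt ℝ G x
  · have h1 : fderiv ℝ f x = Real.exp (G x) • fderiv ℝ G x := (hd.hasFDerivAt.exp).fderiv
    rw [h1, norm_smul]
    have h2 : ‖fderiv ℝ G x‖ ≤ C := norm_fderiv_le_of_lipschitz ℝ hG
    have := Real.exp_pos (G x)
    calc ‖Real.exp (G x)‖ * ‖fderiv ℝ G x‖ = Real.exp (G x) * ‖fderiv ℝ G x‖ := by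
          rw [Real.norm_eq_abs, abs_of_pos this]
      _ ≤ Real.exp (G x) * C := by nlinarith [norm_nonneg (fderiv ℝ G x)]
      _ = C * Real.exp (G x) := mul_comm _ _
  · have hnd : ¬ DifferentiableAt ℝ f x := by
      intro h
      apply hd
      have hGf : G = fun y => Real.log (f y) := funext fun y => (Real.log_exp _).symm
      rw [hGf]
      exact h.log (Real.exp_pos _).ne'
    rw [fderiv_zero_of_not_differentiableAt hnd]
    simp
    positivity

lemma herbst_bounded {n : ℕ} (μ : Measure (EuclideanSpace ℝ (Fin n))) [IsProbabilityMeasure μ]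
    (hLSI : ∀ f : EuclideanSpace ℝ (Fin n) → ℝ, (∃ K, LipschitzWith K f) →
      Integrable (fun x => (f x) ^ 2) μ →
      Integrable (fun x => (f x) ^ 2 * Real.log ((f x) ^ 2)) μ →
      Integrable (fun x => ‖gradient f x‖ ^ 2) μ →
      entFn μ (fun x => (f x) ^ 2) ≤ 2 * ∫ x, ‖gradient f x‖ ^ 2 ∂μ)
    (L : ℝ) (hL : 0 ≤ L) (F : EuclideanSpace ℝ (Fin n) → ℝ)
    (hlip : LipschitzWith (Real.toNNReal L) F) (k : ℝ) (hk : ∀ x, |F x| ≤ k) :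
    ∫ x, Real.exp (F x) ∂μ ≤ Real.exp ((∫ x, F x ∂μ) + L ^ 2 / 2) := by
  have hk0 : 0 ≤ k := le_trans (abs_nonneg _) (hk 0)
  have hFc : Continuous F := hlip.continuous
  -- integrability of bounded continuous functions
  have intc : ∀ (g : EuclideanSpace ℝ (Fin n) → ℝ) (c : ℝ), Continuous g → (∀ x, |g x| ≤ c) →
      Integrable g μ := fun g c hg hb =>
    (integrable_const c).mono' hg.aestronglyMeasurable
      (ae_of_all _ (fun x => by simpa [Real.norm_eq_abs] using hb x))
  set φ : ℝ → ℝ := fun s => ∫ x, Real.exp (s * F x) ∂μ with hφ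
  set φ' : ℝ → ℝ := fun s => ∫ x, F x * Real.exp (s * F x) ∂μ with hφ'
  -- pointwise bounds
  have hexp_le : ∀ (s : ℝ) x, Real.exp (s * F x) ≤ Real.exp (|s| * k) := by
    intro s x
    apply Real.exp_le_exp.mpr
    calc s * F x ≤ |s * F x| := le_abs_self _
      _ = |s| * |F x| := abs_mul _ _
      _ ≤ |s| * k := by nlinarith [abs_nonneg s, hk x, abs_nonneg (F x)]
  have hint_exp : ∀ s : ℝ, Integrable (fun x => Real.exp (s * F x)) μ := fun s =>
    intc _ (Real.exp (|s| * k)) (Real.continuous_exp.comp (continuous_const.mul hFc))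
      (fun x => by rw [abs_of_pos (Real.exp_pos _)]; exact hexp_le s x)
  have hint_fexp : ∀ s : ℝ, Integrable (fun x => F x * Real.exp (s * F x)) μ := fun s =>
    intc _ (k * Real.exp (|s| * k)) (hFc.mul (Real.continuous_exp.comp (continuous_const.mul hFc)))
      (fun x => by
        rw [abs_mul, abs_of_pos (Real.exp_pos _)]
        have := hk x
        have := hexp_le s x
        nlinarith [abs_nonneg (F x), Real.exp_pos (s * F x)])
  have hφd : ∀ s : ℝ, HasDerivAt φ (φ' s) s := by
    intro s
    have key := hasDerivAt_integral_of_dominated_loc_of_deriv_le (μ := μ) (𝕜 := ℝ)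
      (F := fun t x => Real.exp (t * F x)) (F' := fun t x => F x * Real.exp (t * F x))
      (x₀ := s) (bound := fun _ => k * Real.exp ((|s| + 1) * k)) (s := Metric.ball s 1) (Metric.ball_mem_nhds s one_pos)
      (Eventually.of_forall fun t =>
        (Real.continuous_exp.comp (continuous_const.mul hFc)).aestronglyMeasurable)
      (hint_exp s)
      ((hFc.mul (Real.continuous_exp.comp (continuous_const.mul hFc))).aestronglyMeasurable)
      (ae_of_all _ (fun x t ht => by
        have ht' : |t| ≤ |s| + 1 := by
          rw [Metric.mem_ball, Real.dist_eq] at ht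
          have := abs_sub_abs_le_abs_sub t s
          linarith
        have h1 := hk x
        have h2 : Real.exp (t * F x) ≤ Real.exp ((|s| + 1) * k) := by
          apply Real.exp_le_exp.mpr
          calc t * F x ≤ |t| * |F x| := by
                calc t * F x ≤ |t * F x| := le_abs_self _
                  _ = |t| * |F x| := abs_mul _ _
            _ ≤ (|s| + 1) * k := by nlinarith [abs_nonneg (F x), abs_nonneg t]
        rw [Real.norm_eq_abs, abs_mul, abs_of_pos (Real.exp_pos _)]
        exact mul_le_mul h1 h2 (Real.exp_pos _).le hk0))
      (integrable_const _)
      (ae_of_all _ (fun x t _ => by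
        have h := (hasDerivAt_mul_const (F x) (x := t)).exp
        simpa [mul_comm] using h))
    exact key.2
  have hφpos : ∀ s : ℝ, 0 < φ s := by
    intro s
    have h1 : Real.exp (-(|s| * k)) ≤ φ s := by
      have : (∫ _x, Real.exp (-(|s| * k)) ∂μ) = Real.exp (-(|s| * k)) := by
        simp [measure_univ]
      rw [← this]
      apply integral_mono (integrable_const _) (hint_exp s)
      intro x
      apply Real.exp_le_exp.mpr
      have : |s * F x| ≤ |s| * k := by
        rw [abs_mul]; nlinarith [abs_nonneg s, hk x, abs_nonneg (F x)]
      have := neg_abs_le (s * F x)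
      linarith
    linarith [Real.exp_pos (-(|s| * k))]
  have hφ0 : φ 0 = 1 := by simp [hφ, measure_univ]
  set g : ℝ → ℝ := fun s => Real.log (φ s) with hg
  have hgd : ∀ s : ℝ, HasDerivAt g (φ' s / φ s) s := fun s => (hφd s).log (hφpos s).ne'
  have hφ'0 : φ' 0 = ∫ x, F x ∂μ := by simp [hφ']
  -- Key LSI-derived differential inequality
  have key : ∀ s : ℝ, 0 < s → s * φ' s ≤ φ s * Real.log (φ s) + s ^ 2 * L ^ 2 / 2 * φ s := by
    intro s hs
    set f : EuclideanSpace ℝ (Fin n) → ℝ := fun x => Real.exp (s * F x / 2) with hfdef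
    set G : EuclideanSpace ℝ (Fin n) → ℝ := fun x => s * F x / 2 with hGdef
    have hf2 : ∀ x, f x ^ 2 = Real.exp (s * F x) := fun x => by
      rw [sq, ← Real.exp_add]; ring_nf
    have hGlip : LipschitzWith (Real.toNNReal (s * L / 2)) G := by
      apply LipschitzWith.of_dist_le_mul
      intro x y
      have h1 := hlip.dist_le_mul x y
      rw [Real.dist_eq] at h1 ⊢
      have hcoe : ((Real.toNNReal L : NNReal) : ℝ) = L := Real.coe_toNNReal _ hL
      rw [hcoe] at h1
      have hcoe2 : ((Real.toNNReal (s * L / 2) : NNReal) : ℝ) = s * L / 2 :=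
        Real.coe_toNNReal _ (by positivity)
      rw [hcoe2]
      have : G x - G y = (s / 2) * (F x - F y) := by simp [hGdef]; ring
      rw [this, abs_mul, abs_of_pos (by positivity : (0:ℝ) < s / 2)]
      calc s / 2 * |F x - F y| ≤ s / 2 * (L * dist x y) := by
            nlinarith [dist_nonneg (x := x) (y := y), abs_nonneg (F x - F y)]
        _ = s * L / 2 * dist x y := by ring
    have hgrad : ∀ x, ‖gradient f x‖ ≤ s * L / 2 * f x := by
      intro x
      have := grad_exp_bound hGlip x
      rwa [Real.coe_toNNReal _ (by positivity : (0:ℝ) ≤ s * L / 2)] at this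
    have hfbd : ∀ x, f x ≤ Real.exp (|s| * k) := by
      intro x
      apply Real.exp_le_exp.mpr
      have h1 : s * F x ≤ |s| * k := by
        calc s * F x ≤ |s * F x| := le_abs_self _
          _ = |s| * |F x| := abs_mul _ _
          _ ≤ |s| * k := by nlinarith [abs_nonneg s, hk x, abs_nonneg (F x)]
      nlinarith [mul_nonneg (abs_nonneg s) hk0]
    have hfpos : ∀ x, 0 < f x := fun x => Real.exp_pos _
    have h1 : Integrable (fun x => f x ^ 2) μ := by
      simp only [hf2]; exact hint_exp s
    have h2 : Integrable (fun x => f x ^ 2 * Real.log (f x ^ 2)) μ := by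
      have : (fun x => f x ^ 2 * Real.log (f x ^ 2)) =
          fun x => s * (F x * Real.exp (s * F x)) := by
        funext x
        rw [hf2 x, Real.log_exp]; ring
      rw [this]
      exact (hint_fexp s).const_mul s
    have hgradmeas : AEStronglyMeasurable (fun x => ‖gradient f x‖ ^ 2) μ := by
      have hm : Measurable (gradient f) :=
        ((InnerProductSpace.toDual ℝ (EuclideanSpace ℝ (Fin n))).symm.continuous.measurable).comp
          (measurable_fderiv ℝ f)
      exact ((hm.norm).pow_const 2).aestronglyMeasurable
    have h3 : Integrable (fun x => ‖gradient f x‖ ^ 2) μ := by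
      apply (integrable_const ((s * L / 2 * Real.exp (|s| * k)) ^ 2)).mono' hgradmeas
      apply ae_of_all
      intro x
      rw [Real.norm_eq_abs, abs_of_nonneg (by positivity)]
      have hb1 : ‖gradient f x‖ ≤ s * L / 2 * Real.exp (|s| * k) := by
        calc ‖gradient f x‖ ≤ s * L / 2 * f x := hgrad x
          _ ≤ s * L / 2 * Real.exp (|s| * k) := by
              nlinarith [hfbd x, hfpos x, mul_nonneg (mul_nonneg hs.le hL) (hfpos x).le]
      exact pow_le_pow_left₀ (norm_nonneg _) hb1 2
    have hexpkey : ∀ a b : ℝ, a ≤ b → Real.exp b - Real.exp a ≤ Real.exp b * (b - a) := by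
      intro a b hab
      have := Real.add_one_le_exp (a - b)
      have e : Real.exp a = Real.exp b * Real.exp (a - b) := by rw [← Real.exp_add]; ring_nf
      rw [e]; nlinarith [Real.exp_pos b]
    have hflip : LipschitzWith (Real.toNNReal (s * L / 2 * Real.exp (|s| * k))) f := by
      apply LipschitzWith.of_dist_le_mul
      intro x y
      rw [Real.dist_eq, Real.coe_toNNReal _ (by positivity)]
      have hG := hGlip.dist_le_mul x y
      rw [Real.dist_eq, Real.coe_toNNReal _ (by positivity)] at hG
      show |Real.exp (G x) - Real.exp (G y)| ≤ _
      have hb : ∀ z, Real.exp (G z) ≤ Real.exp (|s| * k) := fun z => hfbd z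
      rcases le_total (G x) (G y) with h | h
      · have hh := hexpkey _ _ h
        rw [abs_sub_comm, abs_of_nonneg (by linarith [Real.exp_le_exp.mpr h])]
        have hd : G y - G x ≤ |G x - G y| := by rw [abs_sub_comm]; exact le_abs_self _
        calc Real.exp (G y) - Real.exp (G x) ≤ Real.exp (G y) * (G y - G x) := hh
          _ ≤ Real.exp (|s| * k) * (s * L / 2 * dist x y) :=
            mul_le_mul (hb y) (hd.trans hG) (by linarith) (by positivity)
          _ = _ := by ring
      · have hh := hexpkey _ _ h
        rw [abs_of_nonneg (by linarith [Real.exp_le_exp.mpr h])]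
        have hd : G x - G y ≤ |G x - G y| := le_abs_self _
        calc Real.exp (G x) - Real.exp (G y) ≤ Real.exp (G x) * (G x - G y) := hh
          _ ≤ Real.exp (|s| * k) * (s * L / 2 * dist x y) :=
            mul_le_mul (hb x) (hd.trans hG) (by linarith) (by positivity)
          _ = _ := by ring
    have hlsi := hLSI f ⟨_, hflip⟩ h1 h2 h3
    -- bound the RHS
    have hrhs : 2 * (∫ x, ‖gradient f x‖ ^ 2 ∂μ) ≤ s ^ 2 * L ^ 2 / 2 * φ s := by
      have hmono : (∫ x, ‖gradient f x‖ ^ 2 ∂μ) ≤ ∫ x, (s * L / 2) ^ 2 * f x ^ 2 ∂μ := by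
        apply integral_mono h3 (h1.const_mul _)
        intro x
        have := hgrad x
        calc ‖gradient f x‖ ^ 2 ≤ (s * L / 2 * f x) ^ 2 :=
              pow_le_pow_left₀ (norm_nonneg _) (hgrad x) 2
          _ = (s * L / 2) ^ 2 * f x ^ 2 := by ring
      have heq : (∫ x, (s * L / 2) ^ 2 * f x ^ 2 ∂μ) = (s * L / 2) ^ 2 * φ s := by
        rw [integral_const_mul]
        congr 1
        simp only [hf2]
        rfl
      nlinarith [hmono, heq]
    -- compute the entropy
    have hent : entFn μ (fun x => f x ^ 2) = s * φ' s - φ s * Real.log (φ s) := by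
      rw [entFn]
      have e1 : (∫ x, f x ^ 2 * Real.log (f x ^ 2) ∂μ) = s * φ' s := by
        have : (fun x => f x ^ 2 * Real.log (f x ^ 2)) =
            fun x => s * (F x * Real.exp (s * F x)) := by
          funext x; rw [hf2 x, Real.log_exp]; ring
        rw [this, integral_const_mul]
      have e2 : (∫ x, f x ^ 2 ∂μ) = φ s := by simp only [hf2]; rfl
      rw [e1, e2]
    rw [hent] at hlsi
    linarith
  -- monotonicity of s ↦ g s / s - s L²/2 on (0,1]
  have hgc : Continuous g := by
    rw [continuous_iff_continuousAt]; exact fun s => (hgd s).continuousAt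
  have mono : AntitoneOn (fun s => g s / s - s * (L ^ 2 / 2)) (Set.Ioc (0:ℝ) 1) := by
    apply antitoneOn_of_deriv_nonpos (convex_Ioc 0 1)
    · exact ((hgc.continuousOn.div continuousOn_id (fun s hs => hs.1.ne')).sub
        (continuous_id.mul continuous_const).continuousOn)
    · rw [interior_Ioc]
      intro x hx
      exact (((hgd x).div (hasDerivAt_id x) hx.1.ne').sub
        ((hasDerivAt_id x).mul_const (L ^ 2 / 2))).differentiableAt.differentiableWithinAt
    · rw [interior_Ioc]
      intro x hx
      have hD : HasDerivAt (fun s => g s / s - s * (L ^ 2 / 2))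
          ((φ' x / φ x * x - g x * 1) / x ^ 2 - (1 * (L ^ 2 / 2))) x := by
        exact ((hgd x).div (hasDerivAt_id x) hx.1.ne').sub
          ((hasDerivAt_id x).mul_const (L ^ 2 / 2))
      rw [hD.deriv]
      have hp := hφpos x
      have h2 : x * φ' x / φ x ≤ g x + x ^ 2 * L ^ 2 / 2 := by
        rw [div_le_iff₀ hp]
        nlinarith [key x hx.1]
      have hx2 : (0:ℝ) < x ^ 2 := pow_pos hx.1 2
      rw [sub_nonpos, one_mul, mul_one, div_le_iff₀ hx2]
      have h3 : φ' x / φ x * x = x * φ' x / φ x := by ring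
      rw [h3]
      nlinarith [h2]
  -- limit at 0⁺
  have hg0 : g 0 = 0 := by simp [hg, hφ0]
  have hlim : Tendsto (fun a => g a / a) (nhdsWithin 0 (Set.Ioi 0)) (nhds (∫ x, F x ∂μ)) := by
    have h0 : HasDerivAt g (∫ x, F x ∂μ) 0 := by
      have := hgd 0
      rwa [hφ'0, hφ0, div_one] at this
    have hslope := hasDerivAt_iff_tendsto_slope.mp h0
    have hmono : nhdsWithin (0:ℝ) (Set.Ioi 0) ≤ nhdsWithin 0 {(0:ℝ)}ᶜ :=
      nhdsWithin_mono _ (fun a ha => by simpa using (ne_of_gt ha))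
    have := hslope.mono_left hmono
    apply this.congr
    intro a
    rw [slope_def_field]
    rw [hg0, sub_zero, sub_zero]
  -- conclude g 1 ≤ ∫ F + L²/2
  have hg1 : g 1 - L ^ 2 / 2 ≤ ∫ x, F x ∂μ := by
    apply ge_of_tendsto hlim
    filter_upwards [Ioc_mem_nhdsGT_of_mem (Set.mem_Ico.mpr ⟨le_refl (0:ℝ), one_pos⟩)] with a ha
    have h1 : (fun s => g s / s - s * (L ^ 2 / 2)) 1 ≤ (fun s => g s / s - s * (L ^ 2 / 2)) a :=
      mono ha (Set.mem_Ioc.mpr ⟨zero_lt_one, le_refl 1⟩) ha.2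
    simp only [div_one] at h1
    have : 0 ≤ a * (L ^ 2 / 2) := by
      have := ha.1
      positivity
    linarith
  have hφ1 : φ 1 = ∫ x, Real.exp (F x) ∂μ := by simp [hφ]
  calc (∫ x, Real.exp (F x) ∂μ) = φ 1 := hφ1.symm
    _ = Real.exp (g 1) := (Real.exp_log (hφpos 1)).symm
    _ ≤ Real.exp ((∫ x, F x ∂μ) + L ^ 2 / 2) := Real.exp_le_exp.mpr (by linarith)


lemma herbst_general {n : ℕ} (μ : Measure (EuclideanSpace ℝ (Fin n))) [IsProbabilityMeasure μ]
    (L : ℝ) (F : EuclideanSpace ℝ (Fin n) → ℝ)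
    (hlip : LipschitzWith (Real.toNNReal L) F) (hFi : Integrable F μ)
    (hEi : Integrable (fun x => Real.exp (F x)) μ)
    (hA : ∀ (G : EuclideanSpace ℝ (Fin n) → ℝ), LipschitzWith (Real.toNNReal L) G →
      ∀ k : ℝ, (∀ x, |G x| ≤ k) →
      ∫ x, Real.exp (G x) ∂μ ≤ Real.exp ((∫ x, G x ∂μ) + L ^ 2 / 2)) :
    ∫ x, Real.exp (F x) ∂μ ≤ Real.exp ((∫ x, F x ∂μ) + L ^ 2 / 2) := by
  set Fc : ℕ → EuclideanSpace ℝ (Fin n) → ℝ :=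
    fun j x => max (min (F x) j) (-(j:ℝ)) with hFcdef
  have hlipj : ∀ j : ℕ, LipschitzWith (Real.toNNReal L) (Fc j) :=
    fun j => (hlip.min_const _).max_const _
  have hbj : ∀ (j : ℕ) x, |Fc j x| ≤ (j:ℝ) := by
    intro j x
    rw [abs_le]
    refine ⟨le_max_right _ _, max_le (min_le_right _ _) ?_⟩
    have : (0:ℝ) ≤ j := j.cast_nonneg
    linarith
  have hleabs : ∀ (j : ℕ) x, |Fc j x| ≤ |F x| := by
    intro j x
    rw [abs_le]
    constructor
    · exact le_max_of_le_left (le_min (neg_abs_le _)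
        (le_trans (neg_nonpos.mpr (abs_nonneg _)) j.cast_nonneg))
    · exact max_le ((min_le_left _ _).trans (le_abs_self _))
        ((neg_nonpos.mpr j.cast_nonneg).trans (abs_nonneg _))
  have hexple : ∀ (j : ℕ) x, Real.exp (Fc j x) ≤ Real.exp (F x) + 1 := by
    intro j x
    have h1 : Fc j x ≤ max (F x) 0 :=
      max_le ((min_le_left _ _).trans (le_max_left _ _))
        ((neg_nonpos.mpr j.cast_nonneg).trans (le_max_right _ _))
    have h2 : Real.exp (max (F x) 0) ≤ Real.exp (F x) + 1 := by
      rcases le_total (F x) 0 with h | h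
      · rw [max_eq_right h]
        have := Real.exp_pos (F x)
        simp only [Real.exp_zero]
        linarith
      · rw [max_eq_left h]
        linarith
    exact le_trans (Real.exp_le_exp.mpr h1) h2
  have hptF : ∀ x, Tendsto (fun j : ℕ => Fc j x) atTop (nhds (F x)) := by
    intro x
    apply tendsto_atTop_of_eventually_const (i₀ := ⌈|F x|⌉₊)
    intro j hj
    have h1 : |F x| ≤ (j:ℝ) := le_trans (Nat.le_ceil _) (Nat.cast_le.mpr hj)
    have h2 := abs_le.mp h1
    rw [hFcdef]
    simp only
    rw [min_eq_left h2.2, max_eq_left h2.1]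
  have hmeasj : ∀ j : ℕ, AEStronglyMeasurable (Fc j) μ :=
    fun j => (hlipj j).continuous.aestronglyMeasurable
  have hI1 : Tendsto (fun j : ℕ => ∫ x, Fc j x ∂μ) atTop (nhds (∫ x, F x ∂μ)) := by
    apply tendsto_integral_of_dominated_convergence (fun x => |F x|) hmeasj hFi.abs
    · intro j
      exact ae_of_all _ fun x => by simpa [Real.norm_eq_abs] using hleabs j x
    · exact ae_of_all _ hptF
  have hI2 : Tendsto (fun j : ℕ => ∫ x, Real.exp (Fc j x) ∂μ) atTop
      (nhds (∫ x, Real.exp (F x) ∂μ)) := by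
    apply tendsto_integral_of_dominated_convergence (fun x => Real.exp (F x) + 1)
      (fun j => (Real.continuous_exp.comp (hlipj j).continuous).aestronglyMeasurable)
      (hEi.add (integrable_const 1))
    · intro j
      exact ae_of_all _ fun x => by
        simp only [Function.comp_apply, Real.norm_eq_abs, abs_of_pos (Real.exp_pos _)]
        exact hexple j x
    · exact ae_of_all _ fun x => (Real.continuous_exp.tendsto _).comp (hptF x)
  have hRHS : Tendsto (fun j : ℕ => Real.exp ((∫ x, Fc j x ∂μ) + L ^ 2 / 2)) atTop
      (nhds (Real.exp ((∫ x, F x ∂μ) + L ^ 2 / 2))) :=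
    (Real.continuous_exp.tendsto _).comp (hI1.add_const _)
  exact le_of_tendsto_of_tendsto' hI2 hRHS fun j => hA (Fc j) (hlipj j) j (hbj j)

/-- If `μ` satisfies the LSI with constant `1`, `u > 0` with
`∫ u² dμ = 1` and `log u` `λ`-Lipschitz, then `-∫ log u dμ ≤ λ²` and, for all `t > 0`,
`∫ u^{-t} dμ ≤ exp(t λ² (1 + t/2))`. -/
theorem exp_moment_bounds_log_lipschitz {n : ℕ} (lam : ℝ) (hlam : 0 ≤ lam)
    (μ : Measure (EuclideanSpace ℝ (Fin n))) [IsProbabilityMeasure μ]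
    (hLSI : ∀ f : EuclideanSpace ℝ (Fin n) → ℝ, (∃ K, LipschitzWith K f) →
      Integrable (fun x => (f x) ^ 2) μ →
      Integrable (fun x => (f x) ^ 2 * Real.log ((f x) ^ 2)) μ →
      Integrable (fun x => ‖gradient f x‖ ^ 2) μ →
      entFn μ (fun x => (f x) ^ 2) ≤ 2 * ∫ x, ‖gradient f x‖ ^ 2 ∂μ)
    (u : EuclideanSpace ℝ (Fin n) → ℝ) (hu_pos : ∀ x, 0 < u x)
    (hu_sq : Integrable (fun x => (u x) ^ 2) μ)
    (hnorm : ∫ x, (u x) ^ 2 ∂μ = 1)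
    (hlip : LipschitzWith (Real.toNNReal lam) (fun x => Real.log (u x)))
    (hlog_int : Integrable (fun x => Real.log (u x)) μ) :
    (-∫ x, Real.log (u x) ∂μ ≤ lam ^ 2) ∧
    (∀ t : ℝ, 0 < t →
      ∫ x, u x ^ (-t) ∂μ ≤ Real.exp (t * lam ^ 2 * (1 + t / 2))) := by
  have herbst : ∀ (L : ℝ), 0 ≤ L → ∀ (F : EuclideanSpace ℝ (Fin n) → ℝ),
      LipschitzWith (Real.toNNReal L) F → Integrable F μ →
      Integrable (fun x => Real.exp (F x)) μ →
      ∫ x, Real.exp (F x) ∂μ ≤ Real.exp ((∫ x, F x ∂μ) + L ^ 2 / 2) := by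
    intro L hL F hlipF hFi hEi
    exact herbst_general μ L F hlipF hFi hEi
      (fun G hG k hk => herbst_bounded μ hLSI L hL G hG k hk)
  -- Claim 1
  have hlip2 : LipschitzWith (Real.toNNReal (2 * lam)) (fun x => 2 * Real.log (u x)) := by
    apply LipschitzWith.of_dist_le_mul
    intro x y
    have h1 := hlip.dist_le_mul x y
    rw [Real.dist_eq] at h1 ⊢
    rw [Real.coe_toNNReal _ hlam] at h1
    rw [Real.coe_toNNReal _ (by linarith : (0:ℝ) ≤ 2 * lam)]
    have he : (2:ℝ) * Real.log (u x) - 2 * Real.log (u y) =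
        2 * (Real.log (u x) - Real.log (u y)) := by ring
    rw [he, abs_mul, abs_of_pos (by norm_num : (0:ℝ) < 2)]
    nlinarith [dist_nonneg (x := x) (y := y), abs_nonneg (Real.log (u x) - Real.log (u y))]
  have hFeq1 : (fun x => Real.exp (2 * Real.log (u x))) = fun x => u x ^ 2 := by
    funext x
    rw [two_mul, Real.exp_add, Real.exp_log (hu_pos x), ← sq]
  have hEi1 : Integrable (fun x => Real.exp (2 * Real.log (u x))) μ := by
    rw [hFeq1]; exact hu_sq
  have h1 := herbst (2 * lam) (by linarith) _ hlip2 (hlog_int.const_mul 2) hEi1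
  rw [hFeq1] at h1
  rw [hnorm] at h1
  have h2 : (∫ x, 2 * Real.log (u x) ∂μ) = 2 * ∫ x, Real.log (u x) ∂μ := integral_const_mul _ _
  rw [h2] at h1
  have h3 : 0 ≤ 2 * (∫ x, Real.log (u x) ∂μ) + (2 * lam) ^ 2 / 2 :=
    Real.one_le_exp_iff.mp h1
  have claim1 : -∫ x, Real.log (u x) ∂μ ≤ lam ^ 2 := by nlinarith [h3]
  refine ⟨claim1, ?_⟩
  intro t ht
  by_cases hi : Integrable (fun x => u x ^ (-t)) μ
  · have hlipt : LipschitzWith (Real.toNNReal (t * lam)) (fun x => -t * Real.log (u x)) := by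
      apply LipschitzWith.of_dist_le_mul
      intro x y
      have h1 := hlip.dist_le_mul x y
      rw [Real.dist_eq] at h1 ⊢
      rw [Real.coe_toNNReal _ hlam] at h1
      rw [Real.coe_toNNReal _ (by positivity : (0:ℝ) ≤ t * lam)]
      have he : -t * Real.log (u x) - -t * Real.log (u y) =
          -t * (Real.log (u x) - Real.log (u y)) := by ring
      rw [he, abs_mul, abs_neg, abs_of_pos ht]
      nlinarith [dist_nonneg (x := x) (y := y), abs_nonneg (Real.log (u x) - Real.log (u y))]
    have hFeqt : (fun x => Real.exp (-t * Real.log (u x))) = fun x => u x ^ (-t) := by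
      funext x
      rw [Real.rpow_def_of_pos (hu_pos x), mul_comm]
    have ht1 := herbst (t * lam) (by positivity) _ hlipt (hlog_int.const_mul (-t))
      (by rw [hFeqt]; exact hi)
    rw [hFeqt] at ht1
    have ht2 : (∫ x, -t * Real.log (u x) ∂μ) = -t * ∫ x, Real.log (u x) ∂μ :=
      integral_const_mul _ _
    rw [ht2] at ht1
    refine ht1.trans (Real.exp_le_exp.mpr ?_)
    nlinarith [mul_le_mul_of_nonneg_left claim1 ht.le]
  · rw [integral_undef hi]
    exact (Real.exp_pos _).le
end

section
/- Let μ = e^{−V}dx with Hess V ≥ I_n satisfy the LSI with constant 1, and let F: ℝⁿ → ℝ be L-Lipschitz with ∫F dμ = 0. Define H(λ) = log ∫ e^{λF} dμ. If ∫e^F dμ ≥ exp((L²/2)(1 − ε/2)) with ε ≤ 1/2, then there exists λ₀ ∈ [1/2, 1] such that Ent_μ(e^{λ₀F}) ≥ (1−ε)λ₀² (L²/2) ∫e^{λ₀F} dμ. -/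
open MeasureTheory Real

private lemma abs_mul_exp_le (t₀ t s : ℝ) (ht : |t - t₀| ≤ 1) :
    |s * Real.exp (t * s)| ≤ Real.exp ((t₀ + 2) * s) + Real.exp ((t₀ - 2) * s) := by
  have h1 := abs_le.1 ht
  rcases le_total 0 s with hs | hs
  · have hse : s ≤ Real.exp s := by linarith [Real.add_one_le_exp s]
    have h2 : t * s ≤ (t₀ + 1) * s := by nlinarith
    have : |s * Real.exp (t * s)| = s * Real.exp (t * s) := abs_of_nonneg (by positivity)
    rw [this]
    calc s * Real.exp (t * s) ≤ Real.exp s * Real.exp ((t₀ + 1) * s) := by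
          exact mul_le_mul hse (Real.exp_le_exp.2 h2) (Real.exp_pos _).le (Real.exp_pos _).le
      _ = Real.exp ((t₀ + 2) * s) := by rw [← Real.exp_add]; ring_nf
      _ ≤ _ := le_add_of_nonneg_right (Real.exp_pos _).le
  · have hse : -s ≤ Real.exp (-s) := by linarith [Real.add_one_le_exp (-s)]
    have h2 : t * s ≤ (t₀ - 1) * s := by nlinarith
    have : |s * Real.exp (t * s)| = (-s) * Real.exp (t * s) := by
      rw [abs_mul, abs_of_nonpos hs, Real.abs_exp]
    rw [this]
    calc (-s) * Real.exp (t * s) ≤ Real.exp (-s) * Real.exp ((t₀ - 1) * s) := by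
          exact mul_le_mul hse (Real.exp_le_exp.2 h2) (Real.exp_pos _).le (Real.exp_pos _).le
      _ = Real.exp ((t₀ - 2) * s) := by rw [← Real.exp_add]; ring_nf
      _ ≤ _ := le_add_of_nonneg_left (Real.exp_pos _).le

private lemma grad_exp_norm_le {n : ℕ} {L : ℝ} (hL : 0 ≤ L) {F : EuclideanSpace ℝ (Fin n) → ℝ}
    (hFlip : LipschitzWith (Real.toNNReal L) F) (c : ℝ) (x : EuclideanSpace ℝ (Fin n)) :
    ‖gradient (fun y => Real.exp (c * F y)) x‖ ≤ |c| * L * Real.exp (c * F x) := by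
  set g : EuclideanSpace ℝ (Fin n) → ℝ := fun y => Real.exp (c * F y) with hg
  by_cases hd : DifferentiableAt ℝ g x
  · by_cases hc : c = 0
    · subst hc
      have : g = fun _ => (1:ℝ) := by funext y; simp [g]
      rw [this]
      simp [gradient, fderiv_const]
    · have hgpos : (0:ℝ) < g x := Real.exp_pos _
      have hcF : DifferentiableAt ℝ (fun y => c * F y) x := by
        have he : (fun y => c * F y) = fun y => Real.log (g y) := by
          funext y; simp [g, Real.log_exp]
        rw [he]; exact hd.log hgpos.ne'
      have hlipcF : LipschitzWith (‖c‖₊ * Real.toNNReal L) (fun y => c * F y) := by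
        have h := (lipschitzWith_smul (β := ℝ) c).comp hFlip
        simpa [Function.comp_def, smul_eq_mul] using h
      have h1 : HasFDerivAt (fun y => c * F y) (fderiv ℝ (fun y => c * F y) x) x :=
        hcF.hasFDerivAt
      have h2 : HasFDerivAt g
          (Real.exp (c * F x) • fderiv ℝ (fun y => c * F y) x) x :=
        by have := (Real.hasDerivAt_exp (c * F x)).comp_hasFDerivAt x h1; exact this
      have h3 : ‖gradient g x‖ = ‖Real.exp (c * F x) • fderiv ℝ (fun y => c * F y) x‖ := by
        rw [gradient, h2.fderiv, LinearIsometryEquiv.norm_map]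
      have hb : ‖fderiv ℝ (fun y => c * F y) x‖ ≤ |c| * L := by
        have h := norm_fderiv_le_of_lipschitz ℝ hlipcF (x₀ := x)
        have hc : ((‖c‖₊ * Real.toNNReal L : NNReal) : ℝ) = |c| * L := by
          push_cast [Real.coe_toNNReal L hL]
          simp [Real.norm_eq_abs]
        rwa [hc] at h
      rw [h3, norm_smul]
      simp only [Real.norm_eq_abs, Real.abs_exp]
      calc Real.exp (c * F x) * ‖fderiv ℝ (fun y => c * F y) x‖
          ≤ Real.exp (c * F x) * (|c| * L) :=
            mul_le_mul_of_nonneg_left hb (Real.exp_pos _).le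
        _ = |c| * L * Real.exp (c * F x) := by ring
  · rw [gradient_eq_zero_of_not_differentiableAt hd]
    simp only [norm_zero]
    positivity

/-- from the proof of Theorem 1.9. If `μ = e^{-V} dx` with
`Hess V ≥ I_n` satisfies the LSI with constant 1, `F` is `L`-Lipschitz and centered,
and `∫ e^F dμ ≥ exp((L²/2)(1 - ε/2))` with `ε ≤ 1/2`, then there exists
`λ₀ ∈ [1/2, 1]` with `Ent_μ(e^{λ₀F}) ≥ (1-ε) λ₀² (L²/2) ∫ e^{λ₀F} dμ`. -/
theorem herbst_near_equality {n : ℕ} (L ε : ℝ) (hL : 0 < L)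
    (hε0 : 0 ≤ ε) (hε : ε ≤ 1 / 2)
    (V : EuclideanSpace ℝ (Fin n) → ℝ) (hconv : StrongConvexOn Set.univ 1 V)
    (μ : Measure (EuclideanSpace ℝ (Fin n))) [IsProbabilityMeasure μ]
    (hμ : μ = volume.withDensity fun x => ENNReal.ofReal (exp (-V x)))
    (hLSI : ∀ f : EuclideanSpace ℝ (Fin n) → ℝ, LocallyLipschitz f →
      Integrable (fun x => (f x) ^ 2) μ →
      Integrable (fun x => (f x) ^ 2 * Real.log ((f x) ^ 2)) μ →
      Integrable (fun x => ‖gradient f x‖ ^ 2) μ →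
      entFn μ (fun x => (f x) ^ 2) ≤ 2 * ∫ x, ‖gradient f x‖ ^ 2 ∂μ)
    (F : EuclideanSpace ℝ (Fin n) → ℝ)
    (hFlip : LipschitzWith (Real.toNNReal L) F)
    (hFmean : ∫ x, F x ∂μ = 0)
    (hFint : ∀ lam : ℝ, Integrable (fun x => Real.exp (lam * F x)) μ)
    (hFent : ∀ lam : ℝ,
      Integrable (fun x => Real.exp (lam * F x) * Real.log (Real.exp (lam * F x))) μ)
    (hdeficit : ∫ x, Real.exp (F x) ∂μ ≥ Real.exp (L ^ 2 / 2 * (1 - ε / 2))) :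
    ∃ lam₀ ∈ Set.Icc (1 / 2 : ℝ) 1,
      entFn μ (fun x => Real.exp (lam₀ * F x)) ≥
        (1 - ε) * lam₀ ^ 2 * (L ^ 2 / 2) * ∫ x, Real.exp (lam₀ * F x) ∂μ := by
  by_contra hcon
  push_neg at hcon
  -- basic notation
  set N : ℝ → ℝ := fun lam => ∫ x, Real.exp (lam * F x) ∂μ with hNdef
  set D : ℝ → ℝ := fun lam => ∫ x, F x * Real.exp (lam * F x) ∂μ with hDdef
  set E : ℝ → ℝ := fun lam => entFn μ (fun x => Real.exp (lam * F x)) with hEdef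
  have hμne : μ ≠ 0 := IsProbabilityMeasure.ne_zero μ
  have hNpos : ∀ lam, 0 < N lam := fun lam => integral_exp_pos (hFint lam)
  have hFcont : Continuous F := hFlip.continuous
  have hexpmeas : ∀ lam : ℝ, AEStronglyMeasurable (fun x => Real.exp (lam * F x)) μ :=
    fun lam => (Real.continuous_exp.comp (continuous_const.mul hFcont)).aestronglyMeasurable
  -- integrability of F * exp(lam F)
  have hintF : ∀ lam : ℝ, lam ≠ 0 → Integrable (fun x => F x * Real.exp (lam * F x)) μ := by
    intro lam hlam
    have h := hFent lam
    simp only [Real.log_exp] at h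
    have h2 := h.const_mul (1 / lam)
    have he : (fun x => 1 / lam * (Real.exp (lam * F x) * (lam * F x)))
        = fun x => F x * Real.exp (lam * F x) := by
      funext x; field_simp
    rwa [he] at h2
  have hintF0 : Integrable F μ := by
    have h1 := (hintF 1 one_ne_zero).abs
    have h2 := (hintF (-1) (by norm_num)).abs
    refine Integrable.mono' (h1.add h2) hFcont.aestronglyMeasurable (ae_of_all _ fun x => ?_)
    simp only [Real.norm_eq_abs]
    rcases le_total 0 (F x) with hx | hx
    · have : |F x| ≤ |F x * Real.exp (1 * F x)| := by
        rw [abs_mul, Real.abs_exp]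
        nlinarith [Real.one_le_exp (by linarith : (0:ℝ) ≤ 1 * F x), abs_nonneg (F x)]
      exact this.trans (le_add_of_nonneg_right (abs_nonneg _))
    · have : |F x| ≤ |F x * Real.exp ((-1) * F x)| := by
        rw [abs_mul, Real.abs_exp]
        nlinarith [Real.one_le_exp (by linarith : (0:ℝ) ≤ (-1) * F x), abs_nonneg (F x)]
      exact this.trans (le_add_of_nonneg_left (abs_nonneg _))
  have hintF' : ∀ lam : ℝ, Integrable (fun x => F x * Real.exp (lam * F x)) μ := by
    intro lam
    rcases eq_or_ne lam 0 with rfl | hlam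
    · simpa using hintF0
    · exact hintF lam hlam
  -- derivative of N
  have hNderiv : ∀ lam : ℝ, HasDerivAt N (D lam) lam := by
    intro lam
    have key := hasDerivAt_integral_of_dominated_loc_of_deriv_le (μ := μ)
      (F := fun t x => Real.exp (t * F x)) (F' := fun t x => F x * Real.exp (t * F x))
      (x₀ := lam)
      (bound := fun x => Real.exp ((lam + 2) * F x) + Real.exp ((lam - 2) * F x))
      (Metric.ball_mem_nhds lam one_pos)
      (Filter.Eventually.of_forall fun t => hexpmeas t)
      (hFint lam)
      (hintF' lam).aestronglyMeasurable
      (ae_of_all _ fun x t ht => by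
        have hdist : |t - lam| ≤ 1 := le_of_lt (by simpa [Real.dist_eq] using ht)
        rw [Real.norm_eq_abs]
        exact abs_mul_exp_le lam t (F x) hdist)
      ((hFint _).add (hFint _))
      (ae_of_all _ fun x t _ => by
        simpa [mul_comm] using (hasDerivAt_mul_const (F x)).exp)
    exact key.2
  -- entropy identity
  have hEnt : ∀ lam : ℝ, E lam = lam * D lam - N lam * Real.log (N lam) := by
    intro lam
    simp only [hEdef, entFn, Real.log_exp]
    have he : (fun x => Real.exp (lam * F x) * (lam * F x))
        = fun x => lam * (F x * Real.exp (lam * F x)) := by funext x; ring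
    rw [he, integral_const_mul]
  -- Herbst bound via LSI
  have hHerbst : ∀ lam : ℝ, E lam ≤ lam ^ 2 * (L ^ 2 / 2) * N lam := by
    intro lam
    set f : EuclideanSpace ℝ (Fin n) → ℝ := fun x => Real.exp (lam / 2 * F x) with hfdef
    have hsq : (fun x => f x ^ 2) = fun x => Real.exp (lam * F x) := by
      funext x; rw [sq, ← Real.exp_add]; congr 1; ring
    have hgb : ∀ x, ‖gradient f x‖ ≤ |lam / 2| * L * Real.exp (lam / 2 * F x) :=
      fun x => grad_exp_norm_le hL.le hFlip (lam / 2) x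
    have hgradmeas : AEStronglyMeasurable (fun x => ‖gradient f x‖ ^ 2) μ := by
      have h1 : Measurable (fun x => fderiv ℝ f x) := measurable_fderiv ℝ f
      have h2 : Measurable (fun x => gradient f x) :=
        (InnerProductSpace.toDual ℝ (EuclideanSpace ℝ (Fin n))).symm.continuous.measurable.comp h1
      exact (h2.norm.pow_const 2).aestronglyMeasurable
    have hgradint : Integrable (fun x => ‖gradient f x‖ ^ 2) μ := by
      refine Integrable.mono' ((hFint lam).const_mul ((lam / 2) ^ 2 * L ^ 2)) hgradmeas
        (ae_of_all _ fun x => ?_)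
      rw [Real.norm_eq_abs, abs_of_nonneg (by positivity)]
      have h1 : ‖gradient f x‖ ^ 2 ≤ (|lam / 2| * L * Real.exp (lam / 2 * F x)) ^ 2 :=
        pow_le_pow_left₀ (norm_nonneg _) (hgb x) 2
      have h2 : (|lam / 2| * L * Real.exp (lam / 2 * F x)) ^ 2
          = (lam / 2) ^ 2 * L ^ 2 * Real.exp (lam * F x) := by
        rw [mul_pow, mul_pow, sq_abs]
        have harg : Real.exp (lam / 2 * F x) ^ 2 = Real.exp (lam * F x) := by
          rw [sq, ← Real.exp_add]; congr 1; ring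
        rw [harg]
      linarith
    have hloggy : Integrable (fun x => f x ^ 2 * Real.log (f x ^ 2)) μ := by
      have he : (fun x => f x ^ 2 * Real.log (f x ^ 2))
          = fun x => Real.exp (lam * F x) * Real.log (Real.exp (lam * F x)) := by
        funext x
        rw [congrFun hsq x]
      rw [he]; exact hFent lam
    have hfLL : LocallyLipschitz f := by
      have h1 : LocallyLipschitz (fun x => lam / 2 * F x) :=
        ((lipschitzWith_smul (β := ℝ) (lam / 2)).comp hFlip).locallyLipschitz
      exact (Real.contDiff_exp.locallyLipschitz).comp h1
    have hlsi := hLSI f hfLL (by rw [hsq]; exact hFint lam) hloggy hgradint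
    rw [hsq] at hlsi
    have hbd : ∫ x, ‖gradient f x‖ ^ 2 ∂μ ≤ (lam / 2) ^ 2 * L ^ 2 * N lam := by
      have h := integral_mono hgradint ((hFint lam).const_mul ((lam / 2) ^ 2 * L ^ 2))
        (fun x => ?_)
      · rwa [integral_const_mul] at h
      · have h1 : ‖gradient f x‖ ^ 2 ≤ (|lam / 2| * L * Real.exp (lam / 2 * F x)) ^ 2 :=
          pow_le_pow_left₀ (norm_nonneg _) (hgb x) 2
        have h2 : (|lam / 2| * L * Real.exp (lam / 2 * F x)) ^ 2
            = (lam / 2) ^ 2 * L ^ 2 * Real.exp (lam * F x) := by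
          rw [mul_pow, mul_pow, sq_abs]
          have harg : Real.exp (lam / 2 * F x) ^ 2 = Real.exp (lam * F x) := by
            rw [sq, ← Real.exp_add]; congr 1; ring
          rw [harg]
        linarith
    calc E lam ≤ 2 * ∫ x, ‖gradient f x‖ ^ 2 ∂μ := hlsi
      _ ≤ 2 * ((lam / 2) ^ 2 * L ^ 2 * N lam) := by linarith
      _ = lam ^ 2 * (L ^ 2 / 2) * N lam := by ring
  -- derivative of G
  set G : ℝ → ℝ := fun t => Real.log (N t) / t with hGdef
  have hGderiv : ∀ lam : ℝ, 0 < lam → HasDerivAt G (E lam / (lam ^ 2 * N lam)) lam := by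
    intro lam hlam
    have h1 : HasDerivAt (fun t => Real.log (N t)) (D lam / N lam) lam :=
      (hNderiv lam).log (hNpos lam).ne'
    have h2 := h1.div (hasDerivAt_id lam) hlam.ne'
    simp only [id_eq] at h2
    have hN' : N lam ≠ 0 := (hNpos lam).ne'
    have hl' : lam ≠ 0 := hlam.ne'
    have he : (D lam / N lam * lam - Real.log (N lam) * 1) / lam ^ 2
        = E lam / (lam ^ 2 * N lam) := by
      rw [hEnt lam]
      field_simp
    rwa [he] at h2
  -- limit of G at 0+
  have hN0 : N 0 = 1 := by simp [hNdef]
  have hD0 : D 0 = 0 := by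
    simp only [hDdef, zero_mul, Real.exp_zero, mul_one]
    exact hFmean
  have hG0 : Filter.Tendsto G (nhdsWithin 0 (Set.Ioi 0)) (nhds 0) := by
    have hH0 : HasDerivAt (fun t => Real.log (N t)) 0 0 := by
      have := (hNderiv 0).log (hNpos 0).ne'
      rwa [hD0, hN0, zero_div] at this
    rw [hasDerivAt_iff_tendsto_slope] at hH0
    have hmono : nhdsWithin (0:ℝ) (Set.Ioi 0) ≤ nhdsWithin 0 {0}ᶜ :=
      nhdsWithin_mono 0 (fun x hx => ne_of_gt hx)
    refine (hH0.mono_left hmono).congr' ?_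
    filter_upwards [self_mem_nhdsWithin] with t ht
    simp [slope_def_field, hN0, hGdef]
  -- bound at 1/2 via Herbst
  have hGhalf : G (1 / 2) ≤ L ^ 2 / 4 := by
    have key : ∀ δ ∈ Set.Ioo (0:ℝ) (1 / 2), G (1 / 2) ≤ G δ + L ^ 2 / 2 * (1 / 2 - δ) := by
      intro δ hδ
      have hmono : MonotoneOn (fun t => L ^ 2 / 2 * t - G t) (Set.Icc δ (1 / 2)) := by
        apply monotoneOn_of_deriv_nonneg (convex_Icc _ _)
        · intro t ht
          have ht0 : 0 < t := lt_of_lt_of_le hδ.1 ht.1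
          have hlin : HasDerivAt (fun s : ℝ => L ^ 2 / 2 * s) (L ^ 2 / 2) t := by
            simpa using (hasDerivAt_id t).const_mul (L ^ 2 / 2)
          exact (hlin.sub (hGderiv t ht0)).continuousAt.continuousWithinAt
        · intro t ht
          rw [interior_Icc] at ht
          have ht0 : 0 < t := lt_trans hδ.1 ht.1
          have hlin : HasDerivAt (fun s : ℝ => L ^ 2 / 2 * s) (L ^ 2 / 2) t := by
            simpa using (hasDerivAt_id t).const_mul (L ^ 2 / 2)
          exact (hlin.sub (hGderiv t ht0)).differentiableAt.differentiableWithinAt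
        · intro t ht
          rw [interior_Icc] at ht
          have ht0 : 0 < t := lt_trans hδ.1 ht.1
          have hlin : HasDerivAt (fun s : ℝ => L ^ 2 / 2 * s) (L ^ 2 / 2) t := by
            simpa using (hasDerivAt_id t).const_mul (L ^ 2 / 2)
          have hd : HasDerivAt (fun t => L ^ 2 / 2 * t - G t)
              (L ^ 2 / 2 - E t / (t ^ 2 * N t)) t := hlin.sub (hGderiv t ht0)
          rw [hd.deriv]
          have hpos : 0 < t ^ 2 * N t := mul_pos (pow_pos ht0 2) (hNpos t)
          have := hHerbst t
          rw [sub_nonneg, div_le_iff₀ hpos]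
          nlinarith
      have h := hmono (Set.mem_Icc.2 ⟨le_refl δ, hδ.2.le⟩)
        (Set.mem_Icc.2 ⟨hδ.2.le, le_refl _⟩) hδ.2.le
      simp only at h
      linarith
    have htend : Filter.Tendsto (fun δ => G δ + L ^ 2 / 2 * (1 / 2 - δ))
        (nhdsWithin 0 (Set.Ioi 0)) (nhds (0 + L ^ 2 / 2 * (1 / 2 - 0))) := by
      have hc : Continuous fun δ : ℝ => L ^ 2 / 2 * (1 / 2 - δ) :=
        continuous_const.mul (continuous_const.sub continuous_id)
      exact hG0.add ((hc.tendsto 0).mono_left nhdsWithin_le_nhds)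
    have hev : ∀ᶠ δ in nhdsWithin (0:ℝ) (Set.Ioi 0), G (1 / 2) ≤ G δ + L ^ 2 / 2 * (1 / 2 - δ) := by
      filter_upwards [Ioo_mem_nhdsGT_of_mem
        (show (0:ℝ) ∈ Set.Ico (0:ℝ) (1/2) from ⟨le_refl 0, by norm_num⟩)] with δ hδ
      exact key δ hδ
    have := ge_of_tendsto htend hev
    linarith
  -- strict step on [1/2, 1]
  have hstep : G 1 - G (1 / 2) < (1 - ε) * (L ^ 2 / 2) * (1 / 2) := by
    have hmono : StrictMonoOn (fun t => (1 - ε) * (L ^ 2 / 2) * t - G t) (Set.Icc (1 / 2 : ℝ) 1) := by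
      apply strictMonoOn_of_deriv_pos (convex_Icc _ _)
      · intro t ht
        have ht0 : (0:ℝ) < t := lt_of_lt_of_le (by norm_num : (0:ℝ) < 1/2) ht.1
        have hlin : HasDerivAt (fun s : ℝ => (1 - ε) * (L ^ 2 / 2) * s) ((1 - ε) * (L ^ 2 / 2)) t := by
          simpa using (hasDerivAt_id t).const_mul ((1 - ε) * (L ^ 2 / 2))
        exact (hlin.sub (hGderiv t ht0)).continuousAt.continuousWithinAt
      · intro t ht
        rw [interior_Icc] at ht
        have ht0 : (0:ℝ) < t := lt_trans (by norm_num : (0:ℝ) < 1/2) ht.1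
        have hlin : HasDerivAt (fun s : ℝ => (1 - ε) * (L ^ 2 / 2) * s) ((1 - ε) * (L ^ 2 / 2)) t := by
          simpa using (hasDerivAt_id t).const_mul ((1 - ε) * (L ^ 2 / 2))
        have hd : HasDerivAt (fun t => (1 - ε) * (L ^ 2 / 2) * t - G t)
            ((1 - ε) * (L ^ 2 / 2) - E t / (t ^ 2 * N t)) t := hlin.sub (hGderiv t ht0)
        rw [hd.deriv]
        have hpos : 0 < t ^ 2 * N t := mul_pos (pow_pos ht0 2) (hNpos t)
        have hc := hcon t ⟨ht.1.le, ht.2.le⟩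
        rw [sub_pos, div_lt_iff₀ hpos]
        nlinarith
    have h := hmono (Set.mem_Icc.2 ⟨le_refl _, by norm_num⟩)
      (Set.mem_Icc.2 ⟨by norm_num, le_refl (1:ℝ)⟩) (by norm_num)
    simp only at h
    linarith
  -- lower bound on G 1
  have hG1 : L ^ 2 / 2 * (1 - ε / 2) ≤ G 1 := by
    have h1 : G 1 = Real.log (N 1) := by simp [hGdef]
    have h2 : Real.exp (L ^ 2 / 2 * (1 - ε / 2)) ≤ N 1 := by
      simpa [hNdef, one_mul] using hdeficit
    have h3 := Real.log_le_log (Real.exp_pos _) h2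
    rwa [Real.log_exp, ← h1] at h3
  linarith
end
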